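/- arXiv:1105.5129 — 2 statements merged into one kernel-verified Lean document; each statement's English description precedes it below -/
import Mathlib

section
/- Let F be an SCF on 3 alternatives with M^{a,b}(F) ≤ ε₁ for all pairs (a,b), and let G be the derived pairwise-majority-of-conditional-probabilities GSWF. Then NT(G), the probability over a uniform profile that G's output is non-transitive (equivalently, has no Generalized Condorcet Winner among 3 alternatives), is at most 3√ε₁. -/
open Finset
open scoped Classical

/-- A linear order on the three alternatives `{0,1,2}`, represented by its ranking
permutation: `σ a` is the rank of alternative `a` (rank `0` is most preferred). -/
abbrev Order3 := Equiv.Perm (Fin 3)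

/-- A profile of `n` voters on three alternatives. -/
abbrev Profile (n : ℕ) := Fin n → Order3

/-- Voter with ranking `σ` prefers alternative `a` over alternative `b`. -/
def Prefers (σ : Order3) (a b : Fin 3) : Prop := σ a < σ b

/-- The column `x^{a,b} ∈ {0,1}ⁿ` of individual preferences between `a` and `b`. -/
noncomputable def col (n : ℕ) (x : Profile n) (a b : Fin 3) : Fin n → Bool :=
  fun i => decide (Prefers (x i) a b)

/-- `M^{a,b}(F)`: the probability that `F x = a` and `F x' = b`, where `x, x'` are uniform
on profiles conditioned on agreeing in all individual preferences between `a` and `b`. -/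
noncomputable def Mab (n : ℕ) (F : Profile n → Fin 3) (a b : Fin 3) : ℝ :=
  ((univ.filter (fun p : Profile n × Profile n =>
      col n p.1 a b = col n p.2 a b ∧ F p.1 = a ∧ F p.2 = b)).card : ℝ) /
  ((univ.filter (fun p : Profile n × Profile n =>
      col n p.1 a b = col n p.2 a b)).card : ℝ)

/-- The manipulation power `M_i(F)`: the probability over a uniform profile `x` and a uniform
ballot `x'_i` that `x'_i` is a profitable manipulation for voter `i` at `x`. -/
noncomputable def Mi (n : ℕ) (F : Profile n → Fin 3) (i : Fin n) : ℝ :=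
  ((univ.filter (fun p : Profile n × Order3 =>
      Prefers (p.1 i) (F (Function.update p.1 i p.2)) (F p.1))).card : ℝ) /
  (Fintype.card (Profile n × Order3) : ℝ)

/-- `Pr_{x'}[F x' = w ∣ x'^{a,b} = x^{a,b}]`. -/
noncomputable def condP (n : ℕ) (F : Profile n → Fin 3) (a b w : Fin 3) (x : Profile n) : ℝ :=
  ((univ.filter (fun y : Profile n => col n y a b = col n x a b ∧ F y = w)).card : ℝ) /
  ((univ.filter (fun y : Profile n => col n y a b = col n x a b)).card : ℝ)

/-- The derived pairwise GSWF `G^{a,b}`: `a` beats `b` iff, conditioned on the `(a,b)`-column,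
the outcome `a` is more likely than the outcome `b`; ties are broken according to the
preference of the fixed voter `i₀` between `a` and `b`. -/
noncomputable def Gscf (n : ℕ) (F : Profile n → Fin 3) (a b : Fin 3) (i₀ : Fin n)
    (x : Profile n) : Bool :=
  if condP n F a b a x > condP n F a b b x then true
  else if condP n F a b b x > condP n F a b a x then false
  else decide (Prefers (x i₀) a b)

/-- `x` is a minority preference on the pair `(a,b)`. -/
def MinorityOn (n : ℕ) (F : Profile n → Fin 3) (i₀ : Fin n) (a b : Fin 3)
    (x : Profile n) : Prop :=
  (F x = a ∧ Gscf n F a b i₀ x = false) ∨ (F x = b ∧ Gscf n F a b i₀ x = true)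

/-- `N^{a,b}(F)`: the probability that a uniform profile is a minority preference on `(a,b)`. -/
noncomputable def Nab (n : ℕ) (F : Profile n → Fin 3) (i₀ : Fin n) (a b : Fin 3) : ℝ :=
  ((univ.filter (fun x : Profile n => MinorityOn n F i₀ a b x)).card : ℝ) /
  (Fintype.card (Profile n) : ℝ)

/-!
Given the column `x^{a,b}`, the value `G^{a,b}(x)` is determined, so on each fibre of the column
map all minority profiles have the same outcome, the less likely one among `a` and `b`. Hence the
number `m` of minority profiles on a fibre satisfies `m² ≤ A·B`, where `A` and `B` count the
outcomes `a` and `b` there. Cauchy–Schwarz over the `2ⁿ` equally large fibres turns this into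
`N^{a,b}(F)² ≤ M^{a,b}(F)`. Finally, if `G(x)` has no Condorcet winner then `F(x)` loses some
pairwise contest, so `x` is a minority preference on one of the three pairs.
-/

theorem Equiv.Perm.two_mul_card_apply_lt {α : Type*} [Fintype α] [LinearOrder α] {a b : α}
    (hab : a ≠ b) : 2 * #{σ : Equiv.Perm α | σ a < σ b} = (Fintype.card α).factorial := by
  have hswap : #{σ : Equiv.Perm α | σ a < σ b} = #{σ : Equiv.Perm α | σ b < σ a} := by
    refine card_nbij' (· * Equiv.swap a b) (· * Equiv.swap a b) ?_ ?_ ?_ ?_ <;> intro σ <;>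
      simp [mul_assoc]
  have hcompl : #{σ : Equiv.Perm α | σ b < σ a} = #{σ : Equiv.Perm α | ¬ σ a < σ b} := by
    congr 1
    ext σ
    simp [(σ.injective.ne hab).symm.le_iff_lt]
  have hsplit := card_filter_add_card_filter_not (s := univ) fun σ : Equiv.Perm α => σ a < σ b
  rw [card_univ, Fintype.card_perm] at hsplit
  omega

section Fiberwise

variable {X Z : Type*} [Fintype X] [Fintype Z] [DecidableEq Z] (f : X → Z)

theorem card_eq_sum_card_fiber (P : X → Prop) [DecidablePred P] :
    #{x | P x} = ∑ z, #{x | f x = z ∧ P x} := by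
  rw [card_eq_sum_card_fiberwise (f := f) (t := univ) fun _ _ => mem_univ _]
  simp only [filter_filter, and_comm]

theorem card_pairs_eq_sum_card_fiber_mul (P Q : X → Prop) [DecidablePred P] [DecidablePred Q] :
    #{p : X × X | f p.1 = f p.2 ∧ P p.1 ∧ Q p.2} =
      ∑ z, #{x | f x = z ∧ P x} * #{x | f x = z ∧ Q x} := by
  rw [card_eq_sum_card_fiberwise (f := fun p => f p.1) (t := univ) fun _ _ => mem_univ _]
  refine sum_congr rfl fun z _ => ?_
  rw [← card_product, ← filter_product, univ_product_univ, filter_filter]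
  congr 1
  ext ⟨x, y⟩
  simp only [mem_filter, mem_univ, true_and]
  constructor
  · rintro ⟨⟨hxy, hx, hy⟩, rfl⟩
    exact ⟨⟨rfl, hx⟩, hxy.symm, hy⟩
  · rintro ⟨⟨rfl, hx⟩, hy, hy'⟩
    exact ⟨⟨hy.symm, hx, hy'⟩, rfl⟩

theorem card_pairs_eq_sum_card_fiber_sq :
    #{p : X × X | f p.1 = f p.2} = ∑ z, #{x | f x = z} ^ 2 := by
  simpa [sq] using card_pairs_eq_sum_card_fiber_mul f (fun _ => True) (fun _ => True)

theorem sq_card_le_card_mul_sum_card_fiber_mul (M P Q : X → Prop) [DecidablePred M]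
    [DecidablePred P] [DecidablePred Q]
    (hM : ∀ x,
      #{y | f y = f x ∧ M y} ^ 2 ≤ #{y | f y = f x ∧ P y} * #{y | f y = f x ∧ Q y}) :
    #{x | M x} ^ 2 ≤ Fintype.card Z * ∑ z, #{x | f x = z ∧ P x} * #{x | f x = z ∧ Q x} := by
  have hMz : ∀ z,
      #{x | f x = z ∧ M x} ^ 2 ≤ #{x | f x = z ∧ P x} * #{x | f x = z ∧ Q x} := by
    intro z
    by_cases hz : ∃ x, f x = z
    · obtain ⟨x, rfl⟩ := hz
      exact hM x
    · push Not at hz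
      simp [hz]
  rw [card_eq_sum_card_fiber f M]
  exact sq_sum_le_card_mul_sum_sq.trans (Nat.mul_le_mul_left _ (sum_le_sum fun z _ => hMz z))

theorem sq_card_div_card_le_of_card_fiber_eq (k : ℕ) (hk : ∀ z, #{x | f x = z} = k)
    (M P Q : X → Prop) [DecidablePred M] [DecidablePred P] [DecidablePred Q]
    (hM : ∀ x,
      #{y | f y = f x ∧ M y} ^ 2 ≤ #{y | f y = f x ∧ P y} * #{y | f y = f x ∧ Q y}) :
    ((#{x | M x} : ℝ) / Fintype.card X) ^ 2 ≤
      (#{p : X × X | f p.1 = f p.2 ∧ P p.1 ∧ Q p.2} : ℝ) /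
        #{p : X × X | f p.1 = f p.2} := by
  have hX : Fintype.card X = Fintype.card Z * k := by
    simpa [hk] using card_eq_sum_card_fiber f (fun _ => True)
  rw [card_pairs_eq_sum_card_fiber_mul, card_pairs_eq_sum_card_fiber_sq]
  simp only [hk, sum_const, card_univ, smul_eq_mul, hX]
  rcases Nat.eq_zero_or_pos (Fintype.card Z * k) with h0 | hpos
  · rw [h0, Nat.cast_zero, div_zero, zero_pow two_ne_zero]
    exact div_nonneg (Nat.cast_nonneg _) (Nat.cast_nonneg _)
  have hZ : 0 < Fintype.card Z := Nat.pos_of_mul_pos_right hpos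
  have hk : 0 < k := Nat.pos_of_mul_pos_left hpos
  rw [div_pow, div_le_div_iff₀ (by positivity) (by positivity)]
  have hCS := sq_card_le_card_mul_sum_card_fiber_mul f M P Q hM
  exact_mod_cast calc
    #{x | M x} ^ 2 * (Fintype.card Z * k ^ 2)
      ≤ Fintype.card Z * (∑ z, #{x | f x = z ∧ P x} * #{x | f x = z ∧ Q x}) *
          (Fintype.card Z * k ^ 2) := Nat.mul_le_mul_right _ hCS
    _ = (∑ z, #{x | f x = z ∧ P x} * #{x | f x = z ∧ Q x}) * (Fintype.card Z * k) ^ 2 := by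
      ring

end Fiberwise

section Voting

variable {n : ℕ} {F : Profile n → Fin 3} {i₀ : Fin n} {a b : Fin 3}

lemma prefers_swap {σ : Order3} (hab : a ≠ b) : Prefers σ b a ↔ ¬ Prefers σ a b := by
  rw [Prefers, Prefers, not_lt]
  exact (σ.injective.ne hab).symm.le_iff_lt.symm

lemma card_filter_decide_prefers_eq (hab : a ≠ b) (t : Bool) :
    #{σ : Order3 | decide (Prefers σ a b) = t} = 3 := by
  have half : ∀ {c d : Fin 3}, c ≠ d → #{σ : Order3 | σ c < σ d} = 3 := fun {c d} hcd => by
    have h : 2 * #{σ : Order3 | σ c < σ d} = 6 := by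
      convert Equiv.Perm.two_mul_card_apply_lt hcd; rfl
    omega
  cases t
  · exact (congrArg card (filter_congr fun σ _ => by
      rw [decide_eq_false_iff_not, ← prefers_swap hab]; rfl)).trans
      (half hab.symm)
  · exact (congrArg card (filter_congr fun σ _ => by
      rw [decide_eq_true_iff]; rfl)).trans (half hab)

lemma card_col_eq (hab : a ≠ b) (z : Fin n → Bool) :
    #{x : Profile n | col n x a b = z} = 3 ^ n := by
  have he : (univ.filter fun x : Profile n => col n x a b = z)
      = Fintype.piFinset (fun i => univ.filter fun σ : Order3 =>
          decide (Prefers σ a b) = z i) := by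
    ext x
    simp [Fintype.mem_piFinset, col, funext_iff]
  rw [he, Fintype.card_piFinset]
  simp [card_filter_decide_prefers_eq hab]

lemma col_eq_col_swap_iff (hab : a ≠ b) (x y : Profile n) :
    col n y b a = col n x b a ↔ col n y a b = col n x a b := by
  simp only [col, funext_iff, decide_eq_decide, prefers_swap hab, not_iff_not]

lemma condP_swap (hab : a ≠ b) (w : Fin 3) (x : Profile n) :
    condP n F b a w x = condP n F a b w x := by
  simp only [condP, col_eq_col_swap_iff hab x]

lemma gscf_swap (hab : a ≠ b) (x : Profile n) : Gscf n F b a i₀ x = !Gscf n F a b i₀ x := by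
  have hi : decide (Prefers (x i₀) b a) = !decide (Prefers (x i₀) a b) := by
    simp [prefers_swap hab]
  simp only [Gscf, condP_swap hab, hi]
  split_ifs <;> (try simp_all); linarith

lemma condP_eq_of_col_eq {x y : Profile n} (h : col n x a b = col n y a b) (w : Fin 3) :
    condP n F a b w x = condP n F a b w y := by
  simp only [condP, h]

lemma gscf_eq_of_col_eq {x y : Profile n} (h : col n x a b = col n y a b) :
    Gscf n F a b i₀ x = Gscf n F a b i₀ y := by
  have hi : decide (Prefers (x i₀) a b) = decide (Prefers (y i₀) a b) := congrFun h i₀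
  simp only [Gscf, condP_eq_of_col_eq h, hi]

lemma condP_le_condP_iff {v w : Fin 3} (x : Profile n) :
    condP n F a b v x ≤ condP n F a b w x ↔
      #{y | col n y a b = col n x a b ∧ F y = v} ≤
        #{y | col n y a b = col n x a b ∧ F y = w} := by
  have hpos : (0 : ℝ) < #{y | col n y a b = col n x a b} :=
    Nat.cast_pos.mpr (card_pos.mpr ⟨x, by simp⟩)
  rw [condP, condP, div_le_div_iff_of_pos_right hpos, Nat.cast_le]

lemma condP_le_of_gscf_eq_true {x : Profile n} (h : Gscf n F a b i₀ x = true) :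
    condP n F a b b x ≤ condP n F a b a x := by
  by_contra! hlt
  simp [Gscf, hlt, hlt.not_gt] at h

lemma condP_le_of_gscf_eq_false {x : Profile n} (h : Gscf n F a b i₀ x = false) :
    condP n F a b a x ≤ condP n F a b b x := by
  by_contra! hlt
  simp [Gscf, hlt] at h

lemma MinorityOn.eq_cond {x : Profile n} (h : MinorityOn n F i₀ a b x) :
    F x = cond (Gscf n F a b i₀ x) b a := by
  rcases h with ⟨hF, hG⟩ | ⟨hF, hG⟩ <;> simp [hF, hG]

lemma card_minorityOn_fiber_le (x : Profile n) :
    #{y | col n y a b = col n x a b ∧ MinorityOn n F i₀ a b y} ≤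
      #{y | col n y a b = col n x a b ∧ F y = cond (Gscf n F a b i₀ x) b a} := by
  refine card_le_card fun y hy => ?_
  simp only [mem_filter, mem_univ, true_and] at hy ⊢
  exact ⟨hy.1, gscf_eq_of_col_eq (F := F) (i₀ := i₀) hy.1 ▸ hy.2.eq_cond⟩

lemma card_minorityOn_fiber_sq_le (x : Profile n) :
    #{y | col n y a b = col n x a b ∧ MinorityOn n F i₀ a b y} ^ 2 ≤
      #{y | col n y a b = col n x a b ∧ F y = a} *
        #{y | col n y a b = col n x a b ∧ F y = b} := by
  have hm := card_minorityOn_fiber_le (F := F) (i₀ := i₀) (a := a) (b := b) x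
  rw [sq]
  cases hG : Gscf n F a b i₀ x
  · rw [hG, cond_false] at hm
    exact Nat.mul_le_mul hm (hm.trans ((condP_le_condP_iff x).1 (condP_le_of_gscf_eq_false hG)))
  · rw [hG, cond_true] at hm
    exact Nat.mul_le_mul (hm.trans ((condP_le_condP_iff x).1 (condP_le_of_gscf_eq_true hG))) hm

theorem nab_le_sqrt_mab (hab : a ≠ b) : Nab n F i₀ a b ≤ √(Mab n F a b) :=
  Real.le_sqrt_of_sq_le <| sq_card_div_card_le_of_card_fiber_eq (fun x => col n x a b) (3 ^ n)
    (card_col_eq hab) (MinorityOn n F i₀ a b) (F · = a) (F · = b) card_minorityOn_fiber_sq_le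

lemma exists_minorityOn_of_not_exists_winner {x : Profile n}
    (h : ¬ ∃ a : Fin 3, ∀ b : Fin 3, b ≠ a → Gscf n F a b i₀ x = true) :
    ∃ p ∈ ({p : Fin 3 × Fin 3 | p.1 < p.2} : Finset _), MinorityOn n F i₀ p.1 p.2 x := by
  push Not at h
  obtain ⟨c, hc, hG⟩ := h (F x)
  simp only [ne_eq, Bool.not_eq_true] at hG
  rcases hc.lt_or_gt with hlt | hlt
  · exact ⟨(c, F x), by simpa using hlt, Or.inr ⟨rfl, by simp [gscf_swap hc.symm, hG]⟩⟩
  · exact ⟨(F x, c), by simpa using hlt, Or.inl ⟨rfl, hG⟩⟩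

lemma card_not_exists_winner_le_sum :
    #{x : Profile n | ¬ ∃ a : Fin 3, ∀ b : Fin 3, b ≠ a → Gscf n F a b i₀ x = true} ≤
      ∑ p ∈ ({p : Fin 3 × Fin 3 | p.1 < p.2} : Finset _),
        #{x | MinorityOn n F i₀ p.1 p.2 x} := by
  refine (card_le_card fun x hx => ?_).trans card_biUnion_le
  simpa [mem_biUnion] using exists_minorityOn_of_not_exists_winner (mem_filter.1 hx).2

end Voting

/-- If `M^{a,b}(F) ≤ ε₁` for all pairs, then the derived GSWF `G` fails to have a Generalized
Condorcet Winner (equivalently, among 3 alternatives, is non-transitive) with probability at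
most `3·√ε₁`. -/
theorem stmt12 (n : ℕ) (F : Profile n → Fin 3) (i₀ : Fin n) (ε₁ : ℝ)
    (h : ∀ a b : Fin 3, a ≠ b → Mab n F a b ≤ ε₁) :
    ((univ.filter (fun x : Profile n =>
        ¬ ∃ a : Fin 3, ∀ b : Fin 3, b ≠ a → Gscf n F a b i₀ x = true)).card : ℝ) /
      (Fintype.card (Profile n) : ℝ) ≤ 3 * Real.sqrt ε₁ := by
  have hNab : ∀ p ∈ ({p : Fin 3 × Fin 3 | p.1 < p.2} : Finset _),
      Nab n F i₀ p.1 p.2 ≤ √ε₁ := fun p hp =>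
    have hp : p.1 ≠ p.2 := (mem_filter.1 hp).2.ne
    (nab_le_sqrt_mab hp).trans (Real.sqrt_le_sqrt (h _ _ hp))
  calc _ ≤ ∑ p ∈ ({p : Fin 3 × Fin 3 | p.1 < p.2} : Finset _), Nab n F i₀ p.1 p.2 := by
        simp only [Nab, ← sum_div]
        gcongr
        exact_mod_cast card_not_exists_winner_le_sum
    _ ≤ ∑ p ∈ ({p : Fin 3 × Fin 3 | p.1 < p.2} : Finset _), √ε₁ := sum_le_sum hNab
    _ = 3 * √ε₁ := by
        rw [sum_const, nsmul_eq_mul]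
        congr
end

section
/- Let G be a GSWF on n voters and 3 alternatives satisfying IIA, and suppose NT(G) ≥ C₁ε³ whenever Dist(G, TR₃) ≥ ε (quantitative Arrow, assumed). Let F be an SCF on 3 alternatives that is at least ε-far from every dictatorship and anti-dictatorship and satisfies Pr[F=a] ≥ ε for each alternative a, and suppose M^{a,b}(F) ≤ ε₁ for all pairs. Then ε₁ ≥ C₀ε⁶ for a universal constant C₀ > 0 (depending only on C₁). -/
open Finset
open scoped Classical

/-- Probability of an event under the uniform distribution on profiles. -/
noncomputable def Prob3 (n : ℕ) (p : Profile n → Prop) : ℝ :=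
  ((univ.filter p).card : ℝ) / (Fintype.card (Profile n) : ℝ)

/-- The IIA condition for a pairwise aggregation `G` on three alternatives. -/
def IIA3 (n : ℕ) (G : Profile n → Fin 3 → Fin 3 → Bool) : Prop :=
  ∀ x y : Profile n, ∀ a b : Fin 3, col n x a b = col n y a b → G x a b = G y a b

/-- The pairwise outputs of `G` are antisymmetric (a genuine GSWF output). -/
def Antisym3 (n : ℕ) (G : Profile n → Fin 3 → Fin 3 → Bool) : Prop :=
  ∀ x : Profile n, ∀ a b : Fin 3, a ≠ b → G x b a = !G x a b

/-- The output of `G` at `x` is transitive. -/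
def TransAt (n : ℕ) (G : Profile n → Fin 3 → Fin 3 → Bool) (x : Profile n) : Prop :=
  ∀ a b c : Fin 3, a ≠ b → b ≠ c → a ≠ c →
    G x a b = true → G x b c = true → G x a c = true

/-- `NT(G)`: the probability that the output of `G` is non-transitive. -/
noncomputable def NT3 (n : ℕ) (G : Profile n → Fin 3 → Fin 3 → Bool) : ℝ :=
  Prob3 n (fun x => ¬ TransAt n G x)

/-- The fraction of pairwise output values on which two GSWFs differ (averaged over the
three unordered pairs of alternatives and a uniform profile). -/
noncomputable def distG (n : ℕ) (G H : Profile n → Fin 3 → Fin 3 → Bool) : ℝ :=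
  (Prob3 n (fun x => G x 0 1 ≠ H x 0 1) + Prob3 n (fun x => G x 0 2 ≠ H x 0 2) +
    Prob3 n (fun x => G x 1 2 ≠ H x 1 2)) / 3

/-- `Dist(G, TR₃)`: the minimal fraction of output values that must be changed to turn `G`
into an always-transitive GSWF satisfying IIA. -/
noncomputable def DistTR3 (n : ℕ) (G : Profile n → Fin 3 → Fin 3 → Bool) : ℝ :=
  sInf {d : ℝ | ∃ H : Profile n → Fin 3 → Fin 3 → Bool,
    IIA3 n H ∧ Antisym3 n H ∧ (∀ x : Profile n, TransAt n H x) ∧ d = distG n G H}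

/-- The distance between two SCFs: the fraction of profiles where they differ. -/
noncomputable def distSCF (n : ℕ) (F F' : Profile n → Fin 3) : ℝ :=
  Prob3 n (fun x => F x ≠ F' x)

/-!
From `F` build the IIA function `G` that ranks `a` above `b` when, given the voters'
`(a,b)`-preferences, `F` elects `a` more often than `b` (ties broken by label). Splitting
profiles by their `(a,b)`-column and applying Cauchy–Schwarz gives
`Pr[F x = a, but G x ranks b above a] ≤ √M^{a,b}(F)`, so outside probability `6√ε₁` the winner
`F x` beats both other alternatives in `G x`; in particular `NT(G) ≤ 6√ε₁`.

Conversely, by Wilson's form of Arrow's theorem every transitive IIA `H` either never puts some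
alternative on top, or puts voter `i`'s top (or bottom) alternative on top. The reduction goes
through the three cyclic columns `x^{01}, x^{12}, x^{20}` of a profile: they range over all
coordinatewise not-all-equal triples, transitivity forbids the three outputs to be equal, and
functions with this property are constant or one common dictator or anti-dictator. As `F` is
`ε`-far from all of these, `F x` is not `H`'s top with probability `≥ ε`, which forces
`Dist(G, TR₃) ≥ (ε - 6√ε₁)/3`. Hence either `√ε₁ ≥ ε/12`, or the quantitative Arrow bound gives
`C₁ (ε/6)³ ≤ 6√ε₁`; both yield `ε₁ ≥ C₀ ε⁶`.
-/

section NotAllEqual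

variable {n : ℕ}

def NotAllEqual (p q r : Fin n → Bool) : Prop := ∀ i, ¬(p i = q i ∧ q i = r i)

def PreservesNAE (A B C : (Fin n → Bool) → Bool) : Prop :=
  ∀ p q r, NotAllEqual p q r → ¬(A p = B q ∧ B q = C r)

lemma notAllEqual_cons {u v w : Bool} {p q r : Fin n → Bool} :
    NotAllEqual (Fin.cons u p : Fin (n + 1) → Bool) (Fin.cons v q) (Fin.cons w r) ↔
      ¬(u = v ∧ v = w) ∧ NotAllEqual p q r := by
  simp only [NotAllEqual, Fin.forall_fin_succ, Fin.cons_zero, Fin.cons_succ]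

lemma Fin.cons_compl (b : Bool) (p : Fin n → Bool) :
    (Fin.cons b p : Fin (n + 1) → Bool)ᶜ = Fin.cons (!b) pᶜ := by
  ext i; cases i using Fin.cases <;> simp

lemma PreservesNAE.map_compl {D : (Fin n → Bool) → Bool} (h : PreservesNAE D D D)
    (p : Fin n → Bool) : D pᶜ = !D p :=
  Bool.eq_not_iff.2 fun e => h p pᶜ p (fun i => by simp) ⟨e.symm, e⟩

theorem PreservesNAE.eq_dictator : ∀ {n : ℕ} {D : (Fin n → Bool) → Bool},
    PreservesNAE D D D → ∃ i, D = (· i) ∨ D = fun p => !p i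
  | 0, D, h => by
    have := h.map_compl default
    rw [Subsingleton.elim (default : Fin 0 → Bool)ᶜ default] at this
    simp at this
  | n + 1, D, h => by
    set Dt : (Fin n → Bool) → Bool := fun p => D (Fin.cons true p)
    set Df : (Fin n → Bool) → Bool := fun p => D (Fin.cons false p)
    have hDf : ∀ p, Df p = !Dt pᶜ := fun p => by
      simpa [Dt, Df, Fin.cons_compl] using h.map_compl (Fin.cons true pᶜ)
    by_cases hconst : ∃ c, ∀ p, Dt p = c
    · obtain ⟨c, hc⟩ := hconst
      have hD : ∀ x, D x = (x 0 == c) := fun x => by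
        induction x using Fin.consCases with
        | cons b p =>
          have h₁ : D (Fin.cons true p) = c := hc p
          have h₂ : D (Fin.cons false p) = !c := (hDf p).trans (by rw [hc])
          cases b <;> cases c <;> simp [h₁, h₂]
      refine ⟨0, ?_⟩
      cases c
      · exact Or.inr (funext fun x => by simp [hD])
      · exact Or.inl (funext fun x => by simp [hD])
    · push Not at hconst
      -- If `Dt pᶜ = Dt p`, NAE forces `Df` to be constant, yet `Df` takes both values as `Dt` does.
      have hodd : ∀ p, Dt pᶜ = !Dt p := fun p => Bool.eq_not_iff.2 fun e => by
        obtain ⟨q, hq⟩ := hconst (Dt p)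
        have hne : ∀ r, Df r ≠ Dt p := fun r e' =>
          h _ _ (Fin.cons false r) (notAllEqual_cons.2 ⟨by simp, fun i => by simp⟩)
            ⟨e.symm, e.trans e'.symm⟩
        have := hne qᶜ
        rw [hDf, compl_compl] at this
        exact hq (by simpa using this)
      have hft : Df = Dt := funext fun p => by rw [hDf, hodd, Bool.not_not]
      have hDt : PreservesNAE Dt Dt Dt := fun p q r hpqr => by
        have := h (Fin.cons true p) (Fin.cons false q) (Fin.cons true r)
          (notAllEqual_cons.2 ⟨by simp, hpqr⟩)
        rwa [show D (Fin.cons false q) = Dt q from congrFun hft q] at this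
      obtain ⟨i, hi⟩ := hDt.eq_dictator
      have hD : ∀ x, D x = Dt (Fin.tail x) := fun x => by
        induction x using Fin.consCases with
        | cons b p => cases b <;> simp [← congrFun hft p, Dt, Df]
      refine ⟨i.succ, ?_⟩
      rcases hi with hi | hi
      · exact Or.inl (funext fun x => by simp [hD, hi, Fin.tail])
      · exact Or.inr (funext fun x => by simp [hD, hi, Fin.tail])

theorem PreservesNAE.const_or_dictator {A B C : (Fin n → Bool) → Bool}
    (h : PreservesNAE A B C) :
    (∃ c, ∀ p, A p = c) ∨ (∃ c, ∀ p, B p = c) ∨ (∃ c, ∀ p, C p = c) ∨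
      (B = A ∧ C = A ∧ ∃ i, A = (· i) ∨ A = fun p => !p i) := by
  by_cases hA : ∃ c, ∀ p, A p = c
  · exact Or.inl hA
  by_cases hB : ∃ c, ∀ p, B p = c
  · exact Or.inr (Or.inl hB)
  by_cases hC : ∃ c, ∀ p, C p = c
  · exact Or.inr (Or.inr (Or.inl hC))
  have onto : ∀ {E : (Fin n → Bool) → Bool}, ¬(∃ c, ∀ p, E p = c) → ∀ c, ∃ p, E p = c :=
    fun hE c => by
      by_contra! hc
      exact hE ⟨!c, fun p => Bool.eq_not_iff.2 (hc p)⟩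
  have hBA : ∀ p, B pᶜ = !A p := fun p => Bool.eq_not_iff.2 fun e => by
    obtain ⟨r, hr⟩ := onto hC (A p)
    exact h p pᶜ r (fun i => by simp) ⟨e.symm, e.trans hr.symm⟩
  have hCA : ∀ p, C pᶜ = !A p := fun p => Bool.eq_not_iff.2 fun e => by
    obtain ⟨q, hq⟩ := onto hB (A p)
    refine h p q pᶜ (fun i => ?_) ⟨hq.symm, hq.trans e.symm⟩
    simp only [Pi.compl_apply]
    cases p i <;> cases q i <;> decide
  have hCB : ∀ q, C qᶜ = !B q := fun q => Bool.eq_not_iff.2 fun e => by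
    obtain ⟨p, hp⟩ := onto hA (B q)
    exact h p q qᶜ (fun i => by simp) ⟨hp, e.symm⟩
  have hB : B = A := funext fun q => by simpa [hCA] using (hCB q).symm
  have hC : C = A := funext fun p => by simpa [hB] using (hCA pᶜ).trans (hBA pᶜ).symm
  subst hB hC
  exact Or.inr (Or.inr (Or.inr ⟨rfl, rfl, h.eq_dictator⟩))

end NotAllEqual

section Tournament

variable {d e : Fin 3 → Fin 3 → Bool}

lemma not_cyclic_of_transitive (hd : ∀ a b, a ≠ b → d b a = !d a b)
    (ht : ∀ a b c : Fin 3, a ≠ b → b ≠ c → a ≠ c → d a b = true → d b c = true → d a c = true) :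
    ¬(d 0 1 = d 1 2 ∧ d 1 2 = d 2 0) := by
  rintro ⟨h01, h12⟩
  have h02 := hd 2 0 (by decide)
  have h21 := hd 1 2 (by decide)
  cases h : d 2 0
  · have := ht 0 2 1 (by decide) (by decide) (by decide) (by simp [h02, h]) (by simp [h21, h12, h])
    simp [h01, h12, h] at this
  · have := ht 0 1 2 (by decide) (by decide) (by decide) (by simp [h01, h12, h]) (by simp [h12, h])
    simp [h02, h] at this

lemma transitive_of_forall_eq_true (hd : ∀ a b, a ≠ b → d b a = !d a b) (a : Fin 3)
    (ha : ∀ b, b ≠ a → d a b = true) :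
    ∀ u v w : Fin 3, u ≠ v → v ≠ w → u ≠ w → d u v = true → d v w = true → d u w = true := by
  intro u v w huv hvw huw hduv hdvw
  have loses : ∀ b, b ≠ a → d b a = false := fun b hb => by simp [hd a b hb.symm, ha b hb]
  have hv : v ≠ a := by rintro rfl; simp [loses u huv] at hduv
  have hw : w ≠ a := by rintro rfl; simp [loses v hvw] at hdvw
  obtain rfl : u = a := by omega
  exact ha w hw

lemma eq_of_antisymm_of_eq (hd : ∀ a b, a ≠ b → d b a = !d a b)
    (he : ∀ a b, a ≠ b → e b a = !e a b) (h01 : d 0 1 = e 0 1) (h02 : d 0 2 = e 0 2)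
    (h12 : d 1 2 = e 1 2) {a b : Fin 3} (hab : a ≠ b) : d a b = e a b := by
  have swap : ∀ a b, a ≠ b → d a b = e a b → d b a = e b a := fun a b hab h => by
    rw [hd a b hab, he a b hab, h]
  fin_cases a <;> fin_cases b
  all_goals first
    | exact absurd rfl hab
    | assumption
    | exact swap _ _ (by decide) ‹_›

end Tournament

section Profile

variable {n : ℕ}

lemma col_eq_true_iff (x : Profile n) (a b : Fin 3) (i : Fin n) :
    col n x a b i = true ↔ x i a < x i b :=
  decide_eq_true_iff

lemma col_eq_iff {x : Profile n} {a b : Fin 3} {z : Fin n → Bool} :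
    col n x a b = z ↔ ∀ i, (x i a < x i b ↔ z i = true) := by
  rw [funext_iff]
  exact forall_congr' fun i => by rw [Bool.eq_iff_iff, col_eq_true_iff]

lemma col_swap (x : Profile n) {a b : Fin 3} (hab : a ≠ b) : col n x b a = (col n x a b)ᶜ := by
  ext i
  have hne : x i a ≠ x i b := (x i).injective.ne hab
  rw [Bool.eq_iff_iff, col_eq_true_iff, Pi.compl_apply, Bool.compl_eq_bnot, Bool.not_eq_true',
    ← Bool.not_eq_true, col_eq_true_iff, not_lt, hne.symm.le_iff_lt]

lemma col_swap_eq_iff (x y : Profile n) (a b : Fin 3) :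
    col n x b a = col n y b a ↔ col n x a b = col n y a b := by
  rcases eq_or_ne a b with rfl | hab
  · rfl
  · rw [col_swap x hab, col_swap y hab, compl_inj_iff]

lemma exists_col_eq {a b : Fin 3} (hab : a ≠ b) (z : Fin n → Bool) :
    ∃ x : Profile n, col n x a b = z := by
  have : ∀ c : Bool, ∃ σ : Order3, (σ a < σ b ↔ c = true) := by revert a b; decide
  obtain ⟨x, hx⟩ := Classical.skolem.1 fun i => this (z i)
  exact ⟨x, col_eq_iff.2 hx⟩

lemma exists_col_cyclic {p q r : Fin n → Bool} (h : NotAllEqual p q r) :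
    ∃ x : Profile n, col n x 0 1 = p ∧ col n x 1 2 = q ∧ col n x 2 0 = r := by
  have : ∀ u v w : Bool, ¬(u = v ∧ v = w) → ∃ σ : Order3,
      (σ 0 < σ 1 ↔ u = true) ∧ (σ 1 < σ 2 ↔ v = true) ∧ (σ 2 < σ 0 ↔ w = true) := by decide
  obtain ⟨x, hx⟩ := Classical.skolem.1 fun i => this (p i) (q i) (r i) (h i)
  exact ⟨x, col_eq_iff.2 fun i => (hx i).1, col_eq_iff.2 fun i => (hx i).2.1,
    col_eq_iff.2 fun i => (hx i).2.2⟩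

lemma IIA3.exists_factor {H : Profile n → Fin 3 → Fin 3 → Bool} (hI : IIA3 n H) {a b : Fin 3}
    (hab : a ≠ b) : ∃ f : (Fin n → Bool) → Bool, ∀ x, H x a b = f (col n x a b) := by
  choose y hy using exists_col_eq (n := n) hab
  exact ⟨fun z => H (y z) a b, fun x => hI _ _ a b (hy _).symm⟩

lemma eq_symm_zero_of_forall_lt {σ : Order3} {a : Fin 3} (h : ∀ b, b ≠ a → σ a < σ b) :
    a = σ.symm 0 := by
  rw [Equiv.eq_symm_apply]
  by_contra h0
  simpa using h (σ.symm 0) (by rintro rfl; simp at h0)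

lemma eq_symm_two_of_forall_lt {σ : Order3} {a : Fin 3} (h : ∀ b, b ≠ a → σ b < σ a) :
    a = σ.symm 2 := by
  rw [Equiv.eq_symm_apply]
  by_contra h2
  exact absurd (h (σ.symm 2) (by rintro rfl; simp at h2)) (by simpa using (σ a).le_last)

end Profile

section Classification

variable {n : ℕ} {H : Profile n → Fin 3 → Fin 3 → Bool}

def IsTopAt (H : Profile n → Fin 3 → Fin 3 → Bool) (x : Profile n) (a : Fin 3) : Prop :=
  ∀ b, b ≠ a → H x a b = true

lemma exists_forall_not_isTopAt_of_const (hA : Antisym3 n H) {a b : Fin 3} (hab : a ≠ b)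
    {c : Bool} (h : ∀ x, H x a b = c) : ∃ d, ∀ x, ¬IsTopAt H x d := by
  cases c
  · exact ⟨a, fun x ht => by simpa [h] using ht b hab.symm⟩
  · exact ⟨b, fun x ht => by simpa [hA x a b hab, h] using ht a hab⟩

/-- Wilson's form of Arrow's theorem, read off at the top alternative. -/
theorem top_trichotomy (hI : IIA3 n H) (hA : Antisym3 n H) (hT : ∀ x, TransAt n H x) :
    (∃ c, ∀ x, ¬IsTopAt H x c) ∨ (∃ i, ∀ x a, IsTopAt H x a → a = (x i).symm 0) ∨
      (∃ i, ∀ x a, IsTopAt H x a → a = (x i).symm 2) := by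
  obtain ⟨f, h01⟩ := hI.exists_factor (a := 0) (b := 1) (by decide)
  obtain ⟨g, h12⟩ := hI.exists_factor (a := 1) (b := 2) (by decide)
  obtain ⟨k, h20⟩ := hI.exists_factor (a := 2) (b := 0) (by decide)
  have hnae : PreservesNAE f g k := fun p q r hpqr => by
    obtain ⟨x, rfl, rfl, rfl⟩ := exists_col_cyclic hpqr
    rw [← h01, ← h12, ← h20]
    exact not_cyclic_of_transitive (hA x) (hT x)
  rcases hnae.const_or_dictator with ⟨c, hc⟩ | ⟨c, hc⟩ | ⟨c, hc⟩ | ⟨hgf, hkf, i, hi⟩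
  · exact Or.inl (exists_forall_not_isTopAt_of_const hA (by decide) fun x => (h01 x).trans (hc _))
  · exact Or.inl (exists_forall_not_isTopAt_of_const hA (by decide) fun x => (h12 x).trans (hc _))
  · exact Or.inl (exists_forall_not_isTopAt_of_const hA (by decide) fun x => (h20 x).trans (hc _))
  rw [hgf] at h12
  rw [hkf] at h20
  have hodd : ∀ x a b, a ≠ b → f (col n x b a) = !f (col n x a b) := fun x a b hab => by
    rcases hi with rfl | rfl <;> simp [col_swap x hab.symm]
  have hagree : ∀ x a b, a ≠ b → H x a b = f (col n x a b) := fun x a b =>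
    eq_of_antisymm_of_eq (hA x) (hodd x) (h01 x)
      (by rw [hA x 2 0 (by decide), h20, hodd x 2 0 (by decide)]) (h12 x)
  rcases hi with rfl | rfl
  · refine Or.inr (Or.inl ⟨i, fun x a ha => eq_symm_zero_of_forall_lt fun b hb => ?_⟩)
    rw [← col_eq_true_iff]
    simpa [hagree x a b hb.symm] using ha b hb
  · refine Or.inr (Or.inr ⟨i, fun x a ha => eq_symm_two_of_forall_lt fun b hb => ?_⟩)
    rw [← col_eq_true_iff, col_swap x hb.symm]
    simpa [hagree x a b hb.symm] using ha b hb

end Classification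

section Fibers

variable {α β : Type*} [Fintype α] [Fintype β] [DecidableEq β] (f : α → β)
  (P Q : α → Prop) [DecidablePred P] [DecidablePred Q]

lemma card_filter_pairs_eq_sum :
    #{xy : α × α | f xy.1 = f xy.2 ∧ P xy.1 ∧ Q xy.2} =
      ∑ z, #{x | f x = z ∧ P x} * #{y | f y = z ∧ Q y} := by
  rw [card_eq_sum_card_fiberwise (f := fun xy : α × α => f xy.1) (t := univ)
    (fun _ _ => mem_univ _)]
  refine sum_congr rfl fun z _ => ?_
  rw [← card_product]
  congr 1
  ext ⟨x, y⟩
  simp only [mem_filter, mem_univ, true_and, mem_product]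
  constructor
  · rintro ⟨⟨hxy, hx, hy⟩, rfl⟩
    exact ⟨⟨rfl, hx⟩, hxy.symm, hy⟩
  · rintro ⟨⟨rfl, hx⟩, hy, hQ⟩
    exact ⟨⟨hy.symm, hx, hQ⟩, rfl⟩

lemma card_filter_le_sum_min :
    #{x | P x ∧ #{y | f y = f x ∧ P y} ≤ #{y | f y = f x ∧ Q y}} ≤
      ∑ z, min #{x | f x = z ∧ P x} #{y | f y = z ∧ Q y} := by
  rw [card_eq_sum_card_fiberwise (f := f) (t := univ) (fun _ _ => mem_univ _)]
  refine sum_le_sum fun z _ => ?_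
  have hsub : ((univ.filter fun x => P x ∧ #{y | f y = f x ∧ P y} ≤ #{y | f y = f x ∧ Q y}).filter
      fun x => f x = z) ⊆ univ.filter fun x => f x = z ∧ P x := fun x hx => by
    simp only [mem_filter, mem_univ, true_and] at hx ⊢
    exact ⟨hx.2, hx.1.1⟩
  refine le_min (card_le_card hsub) ?_
  by_cases h : #{x | f x = z ∧ P x} ≤ #{y | f y = z ∧ Q y}
  · exact (card_le_card hsub).trans h
  · refine (card_eq_zero.2 (filter_eq_empty_iff.2 fun x hx hfx => h ?_)).le.trans (Nat.zero_le _)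
    subst hfx
    exact (mem_filter.1 hx).2.2

lemma sum_min_sq_le {ι : Type*} (s : Finset ι) (u v : ι → ℕ) :
    (∑ i ∈ s, min (u i) (v i)) ^ 2 ≤ #s * ∑ i ∈ s, u i * v i := by
  refine sq_sum_le_card_mul_sum_sq.trans (Nat.mul_le_mul_left _ (sum_le_sum fun i _ => ?_))
  rw [sq]
  exact Nat.mul_le_mul (min_le_left _ _) (min_le_right _ _)

theorem card_filter_sq_le_card_mul_card_pairs :
    #{x | P x ∧ #{y | f y = f x ∧ P y} ≤ #{y | f y = f x ∧ Q y}} ^ 2 ≤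
      Fintype.card β * #{xy : α × α | f xy.1 = f xy.2 ∧ P xy.1 ∧ Q xy.2} := by
  rw [card_filter_pairs_eq_sum]
  exact (Nat.pow_le_pow_left (card_filter_le_sum_min f P Q) 2).trans (sum_min_sq_le _ _ _)

end Fibers

section Counting

variable {n : ℕ}

lemma card_profile : Fintype.card (Profile n) = 6 ^ n := by
  simp [Fintype.card_perm, Nat.factorial]

lemma card_col_fiber {a b : Fin 3} (hab : a ≠ b) (z : Fin n → Bool) :
    #{x : Profile n | col n x a b = z} = 3 ^ n := by
  have hσ : ∀ c : Bool, #{σ : Order3 | σ a < σ b ↔ c = true} = 3 := by revert a b; decide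
  have : ({x : Profile n | col n x a b = z} : Finset _) =
      Fintype.piFinset fun i => {σ : Order3 | σ a < σ b ↔ z i = true} := by
    ext x
    simp [col_eq_iff]
  simp [this, Fintype.card_piFinset, hσ]

lemma card_col_pairs {a b : Fin 3} (hab : a ≠ b) :
    #{xy : Profile n × Profile n | col n xy.1 a b = col n xy.2 a b} = 2 ^ n * 9 ^ n := by
  have := card_filter_pairs_eq_sum (col n · a b) (fun _ => True) (fun _ => True)
  simp only [and_true] at this
  rw [this]
  simp [card_col_fiber hab, ← mul_pow]

end Counting

section Prob3

variable {n : ℕ} {p q r : Profile n → Prop}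

lemma prob3_eq_card_div [DecidablePred p] :
    Prob3 n p = #{x | p x} / 6 ^ n := by
  unfold Prob3
  rw [card_profile]
  push_cast
  congr

lemma prob3_le_one : Prob3 n p ≤ 1 :=
  div_le_one_of_le₀ (by exact_mod_cast card_le_univ _) (Nat.cast_nonneg _)

lemma prob3_mono (h : ∀ x, p x → q x) : Prob3 n p ≤ Prob3 n q :=
  div_le_div_of_nonneg_right
    (by exact_mod_cast card_le_card (monotone_filter_right _ fun x _ => h x)) (Nat.cast_nonneg _)

lemma prob3_le_sum {ι : Type*} (s : Finset ι) (q : ι → Profile n → Prop)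
    (h : ∀ x, p x → ∃ i ∈ s, q i x) : Prob3 n p ≤ ∑ i ∈ s, Prob3 n (q i) := by
  unfold Prob3
  rw [← sum_div]
  refine div_le_div_of_nonneg_right ?_ (Nat.cast_nonneg _)
  norm_cast
  refine (card_le_card fun x hx => ?_).trans card_biUnion_le
  obtain ⟨i, hi, hqi⟩ := h x (mem_filter.1 hx).2
  exact mem_biUnion.2 ⟨i, hi, mem_filter.2 ⟨mem_univ _, hqi⟩⟩

lemma prob3_le_add (h : ∀ x, p x → q x ∨ r x) : Prob3 n p ≤ Prob3 n q + Prob3 n r := by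
  simpa using prob3_le_sum (p := p) univ ![q, r] fun x hx => by
    rcases h x hx with h | h
    exacts [⟨0, mem_univ _, h⟩, ⟨1, mem_univ _, h⟩]

end Prob3

section TopAlternative

variable {n : ℕ} {G H : Profile n → Fin 3 → Fin 3 → Bool}

lemma nt3_le_prob3_not_isTopAt (hG : Antisym3 n G) (c : Profile n → Fin 3) :
    NT3 n G ≤ Prob3 n (fun x => ¬IsTopAt G x (c x)) :=
  prob3_mono fun x hx htop => hx (transitive_of_forall_eq_true (hG x) (c x) htop)

lemma prob3_not_isTopAt_le_add_distG (hG : Antisym3 n G) (hH : Antisym3 n H)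
    (c : Profile n → Fin 3) :
    Prob3 n (fun x => ¬IsTopAt H x (c x)) ≤
      Prob3 n (fun x => ¬IsTopAt G x (c x)) + 3 * distG n G H := by
  have hcover : ∀ x, ¬IsTopAt H x (c x) → ¬IsTopAt G x (c x) ∨ G x 0 1 ≠ H x 0 1 ∨
      G x 0 2 ≠ H x 0 2 ∨ G x 1 2 ≠ H x 1 2 := fun x hH' => by
    by_contra! h
    exact hH' fun b hb => (eq_of_antisymm_of_eq (hG x) (hH x) h.2.1 h.2.2.1 h.2.2.2 hb.symm) ▸
      h.1 b hb
  have h₁ := prob3_le_add hcover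
  have h₂ := prob3_le_add fun x (h : G x 0 1 ≠ H x 0 1 ∨ G x 0 2 ≠ H x 0 2 ∨ G x 1 2 ≠ H x 1 2) => h
  have h₃ := prob3_le_add fun x (h : G x 0 2 ≠ H x 0 2 ∨ G x 1 2 ≠ H x 1 2) => h
  unfold distG
  linarith

lemma le_prob3_not_isTopAt {F : Profile n → Fin 3} {ε : ℝ}
    (hfar : ∀ i : Fin n, distSCF n F (fun x => (x i).symm 0) ≥ ε ∧
      distSCF n F (fun x => (x i).symm 2) ≥ ε)
    (hprob : ∀ a : Fin 3, Prob3 n (fun x => F x = a) ≥ ε)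
    (hI : IIA3 n H) (hA : Antisym3 n H) (hT : ∀ x, TransAt n H x) :
    ε ≤ Prob3 n (fun x => ¬IsTopAt H x (F x)) := by
  rcases top_trichotomy hI hA hT with ⟨c, hc⟩ | ⟨i, hi⟩ | ⟨i, hi⟩
  · exact (hprob c).trans (prob3_mono fun x hx htop => hc x (hx ▸ htop))
  · exact (hfar i).1.trans (prob3_mono fun x hx htop => hx (hi x _ htop))
  · exact (hfar i).2.trans (prob3_mono fun x hx htop => hx (hi x _ htop))

lemma le_distTR3 {d : ℝ}
    (h : ∀ H, IIA3 n H → Antisym3 n H → (∀ x, TransAt n H x) → d ≤ distG n G H) :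
    d ≤ DistTR3 n G := by
  let K : Profile n → Fin 3 → Fin 3 → Bool := fun _ a b => decide (a < b)
  refine le_csInf ⟨distG n G K, K, fun _ _ _ _ _ => rfl, fun _ a b hab => ?_,
    fun _ a b c _ _ _ hab hbc => ?_, rfl⟩ ?_
  · rcases hab.lt_or_gt with h | h <;> simp [K, h, h.not_gt]
  · simp only [K, decide_eq_true_eq] at hab hbc ⊢
    exact hab.trans hbc
  · rintro _ ⟨H, hI, hA, hT, rfl⟩
    exact h H hI hA hT

end TopAlternative

section Majority

variable {n : ℕ} (F : Profile n → Fin 3)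

noncomputable def colVotes (x : Profile n) (a b c : Fin 3) : ℕ :=
  #{y | col n y a b = col n x a b ∧ F y = c}

noncomputable def majorityGSWF (x : Profile n) (a b : Fin 3) : Bool :=
  decide (colVotes F x a b b < colVotes F x a b a ∨
    colVotes F x a b b = colVotes F x a b a ∧ a < b)

lemma colVotes_swap (x : Profile n) (a b c : Fin 3) : colVotes F x b a c = colVotes F x a b c := by
  simp only [colVotes, col_swap_eq_iff]

lemma colVotes_congr {x y : Profile n} {a b : Fin 3} (h : col n x a b = col n y a b) (c : Fin 3) :
    colVotes F x a b c = colVotes F y a b c := by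
  unfold colVotes
  rw [h]

lemma majorityGSWF_IIA3 : IIA3 n (majorityGSWF F) := fun x y a b h => by
  simp only [majorityGSWF, colVotes_congr F h]

lemma majorityGSWF_antisym3 : Antisym3 n (majorityGSWF F) := fun x a b hab => by
  simp only [majorityGSWF, colVotes_swap F x b a]
  rw [Bool.eq_iff_iff]
  simp only [decide_eq_true_iff, Bool.not_eq_true', decide_eq_false_iff_not]
  omega

lemma colVotes_le_of_majorityGSWF_ne_true {x : Profile n} {a b : Fin 3}
    (h : majorityGSWF F x a b ≠ true) : colVotes F x a b a ≤ colVotes F x a b b := by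
  simp only [ne_eq, majorityGSWF, decide_eq_true_eq, not_or] at h
  omega

lemma prob3_sq_le_Mab {a b : Fin 3} (hab : a ≠ b) :
    Prob3 n (fun x => F x = a ∧ colVotes F x a b a ≤ colVotes F x a b b) ^ 2 ≤ Mab n F a b := by
  have key := card_filter_sq_le_card_mul_card_pairs (fun x : Profile n => col n x a b)
    (F · = a) (F · = b)
  simp only [Fintype.card_fun, Fintype.card_bool, Fintype.card_fin] at key
  have h36 : ((6 : ℝ) ^ n) ^ 2 = 2 ^ n * (2 ^ n * 9 ^ n) := by
    rw [← pow_mul, mul_comm, pow_mul, ← mul_pow, ← mul_pow]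
    norm_num
  rw [prob3_eq_card_div, Mab, card_col_pairs hab, div_pow, h36,
    div_le_div_iff₀ (by positivity) (by positivity)]
  have key' := mul_le_mul_of_nonneg_right ((Nat.cast_le (α := ℝ)).2 key)
    (by positivity : (0 : ℝ) ≤ 2 ^ n * 9 ^ n)
  push_cast at key' ⊢
  unfold colVotes
  linarith

lemma prob3_not_isTopAt_majorityGSWF_le {ε₁ : ℝ} (hM : ∀ a b : Fin 3, a ≠ b → Mab n F a b ≤ ε₁) :
    Prob3 n (fun x => ¬IsTopAt (majorityGSWF F) x (F x)) ≤ 6 * √ε₁ := by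
  have hpair : ∀ ab ∈ (univ : Finset (Fin 3)).offDiag,
      Prob3 n (fun x => F x = ab.1 ∧ majorityGSWF F x ab.1 ab.2 ≠ true) ≤ √ε₁ := by
    rintro ⟨a, b⟩ hab
    have hab : a ≠ b := (mem_offDiag.1 hab).2.2
    calc _ ≤ Prob3 n (fun x => F x = a ∧ colVotes F x a b a ≤ colVotes F x a b b) :=
          prob3_mono fun x hx => ⟨hx.1, colVotes_le_of_majorityGSWF_ne_true F hx.2⟩
      _ ≤ √(Mab n F a b) := Real.le_sqrt_of_sq_le (prob3_sq_le_Mab F hab)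
      _ ≤ √ε₁ := Real.sqrt_le_sqrt (hM a b hab)
  calc _ ≤ ∑ ab ∈ (univ : Finset (Fin 3)).offDiag,
        Prob3 n (fun x => F x = ab.1 ∧ majorityGSWF F x ab.1 ab.2 ≠ true) :=
        prob3_le_sum _ _ fun x hx => by
          obtain ⟨b, hb, hxb⟩ := not_forall₂.1 hx
          exact ⟨(F x, b), mem_offDiag.2 ⟨mem_univ _, mem_univ _, Ne.symm hb⟩, rfl, hxb⟩
    _ ≤ ∑ _ab ∈ (univ : Finset (Fin 3)).offDiag, √ε₁ := sum_le_sum hpair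
    _ = 6 * √ε₁ := by simp [offDiag_card]

lemma Mab_nonneg (a b : Fin 3) : 0 ≤ Mab n F a b := by
  unfold Mab; positivity

end Majority

/-- Assuming the quantitative Arrow theorem with constant `C₁` (`NT(G) ≥ C₁ ε'³ whenever
`Dist(G,TR₃) ≥ ε'`), there is a universal constant `C₀ > 0`, depending only on `C₁`, such
that for every SCF `F` on three alternatives that is `ε`-far from every dictatorship and
anti-dictatorship and elects each alternative with probability at least `ε`, if
`M^{a,b}(F) ≤ ε₁` for all pairs then `ε₁ ≥ C₀ ε⁶`. -/
theorem stmt19 (C₁ : ℝ) (hC₁ : 0 < C₁) :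
    ∃ C₀ : ℝ, 0 < C₀ ∧ ∀ n : ℕ, ∀ F : Profile n → Fin 3, ∀ ε ε₁ : ℝ, 0 < ε →
      (∀ G : Profile n → Fin 3 → Fin 3 → Bool, IIA3 n G → Antisym3 n G →
        ∀ ε' : ℝ, 0 < ε' → DistTR3 n G ≥ ε' → NT3 n G ≥ C₁ * ε' ^ 3) →
      (∀ i : Fin n, distSCF n F (fun x => (x i).symm 0) ≥ ε ∧
        distSCF n F (fun x => (x i).symm 2) ≥ ε) →
      (∀ a : Fin 3, Prob3 n (fun x => F x = a) ≥ ε) →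
      (∀ a b : Fin 3, a ≠ b → Mab n F a b ≤ ε₁) →
      ε₁ ≥ C₀ * ε ^ 6 := by
  refine ⟨min (1 / 144) ((C₁ / 1296) ^ 2), by positivity, ?_⟩
  intro n F ε ε₁ hε hArrow hfar hprob hM
  have hε₁ : 0 ≤ ε₁ := (Mab_nonneg F 0 1).trans (hM 0 1 (by decide))
  have hsq : ∀ t, 0 ≤ t → t ≤ √ε₁ → t ^ 2 ≤ ε₁ := fun t ht h => (Real.le_sqrt ht hε₁).1 h
  have hG := majorityGSWF_antisym3 F
  rcases le_or_gt (ε / 12) √ε₁ with hlarge | hsmall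
  · have hε6 : ε ^ 6 ≤ ε ^ 2 :=
      pow_le_pow_of_le_one hε.le ((hprob 0).trans prob3_le_one) (by norm_num)
    calc _ ≤ 1 / 144 * ε ^ 2 := mul_le_mul (min_le_left _ _) hε6 (by positivity) (by norm_num)
      _ = (ε / 12) ^ 2 := by ring
      _ ≤ ε₁ := hsq _ (by positivity) hlarge
  · have hdist : ε / 6 ≤ DistTR3 n (majorityGSWF F) := le_distTR3 fun H hI hA hT => by
      have h₁ := le_prob3_not_isTopAt hfar hprob hI hA hT
      have h₂ := prob3_not_isTopAt_le_add_distG hG hA F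
      linarith [prob3_not_isTopAt_majorityGSWF_le F hM]
    have hNT := (hArrow _ (majorityGSWF_IIA3 F) hG _ (by positivity) hdist).trans
      ((nt3_le_prob3_not_isTopAt hG F).trans (prob3_not_isTopAt_majorityGSWF_le F hM))
    calc _ ≤ (C₁ / 1296) ^ 2 * ε ^ 6 := by gcongr; exact min_le_right _ _
      _ = (C₁ * ε ^ 3 / 1296) ^ 2 := by ring
      _ ≤ ε₁ := hsq _ (by positivity) (by linarith)
end
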